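/- Let G be a finite additive abelian group and let Σ=(Γ=(V,E),σ) be a signed graph with an orientation ω compatible with σ. Then the number q_Σ(G) of nowhere-zero G-flows of Σ is given by q_Σ(G) = Σ_{A⊆E} (−1)^{|E∖A|} · |G|^{|A|−|V|+k_b(Σ\A^c)} · (|G|/|2G|)^{k_u(Σ\A^c)}. -/

import Mathlib

attribute [local instance] Classical.propDecidable

noncomputable section SignedGraphs

/-- A signed graph: a multigraph with ordered pairs of endpoints (the order is
an artefact of the encoding) together with a sign `±1` on each edge. -/
structure SGraph (V : Type*) (E : Type*) where
  ends : E → V × V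
  sign : E → ℤˣ

namespace SGraph

variable {V E : Type*}

/-- Endpoint of `e` on side `b`; a loop has both endpoints equal, but its two
half-edges are distinguished by the side `b`. -/
def endpt (Γ : SGraph V E) (e : E) (b : Bool) : V :=
  cond b (Γ.ends e).1 (Γ.ends e).2

/-- `e` is a loop of the underlying graph. -/
def IsLoop (Γ : SGraph V E) (e : E) : Prop := (Γ.ends e).1 = (Γ.ends e).2

/-- Walks in a signed multigraph: a step traverses an edge `e` in direction `d`
(from the side-`d` endpoint to the other endpoint). -/
inductive Walk (Γ : SGraph V E) : V → V → Type _
  | nil (v : V) : Walk Γ v v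
  | cons (e : E) (d : Bool) {w : V} (p : Walk Γ (Γ.endpt e (!d)) w) : Walk Γ (Γ.endpt e d) w

namespace Walk

variable {Γ : SGraph V E}

/-- The list of vertices visited by a walk (including the final one). -/
def verts : ∀ {u v : V}, Γ.Walk u v → List V
  | _, _, .nil x => [x]
  | _, _, .cons e d p => Γ.endpt e d :: p.verts

/-- The list of edges traversed by a walk. -/
def edges : ∀ {u v : V}, Γ.Walk u v → List E
  | _, _, .nil _ => []
  | _, _, .cons e _ p => e :: p.edges

/-- The list of (edge, direction) steps of a walk. -/
def steps : ∀ {u v : V}, Γ.Walk u v → List (E × Bool)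
  | _, _, .nil _ => []
  | _, _, .cons e d p => (e, d) :: p.steps

/-- The sources of the steps of a walk, i.e. all visited vertices except the last. -/
def srcs {u v : V} (W : Γ.Walk u v) : List V := W.verts.dropLast

/-- The sign of a walk: the product of the signs of its edges. -/
def sgn : ∀ {u v : V}, Γ.Walk u v → ℤˣ
  | _, _, .nil _ => 1
  | _, _, .cons e _ p => Γ.sign e * p.sgn

/-- Concatenation of walks. -/
def append : ∀ {u v w : V}, Γ.Walk u v → Γ.Walk v w → Γ.Walk u w
  | _, _, _, .nil _, q => q
  | _, _, _, .cons e d p, q => .cons e d (p.append q)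

/-- The sum `Σᵢ f(eᵢ)` of the values of `f` on the edges of the walk,
with multiplicity. -/
def edgeSum {G : Type*} [AddCommGroup G] (f : E → G) {u v : V} (W : Γ.Walk u v) : G :=
  (W.edges.map f).sum

/-- The sum `Σᵢ ω(vᵢ,eᵢ)·(Π_{j<i} σ(eⱼ))·f(eᵢ)` along a walk, where `ω(vᵢ,eᵢ)`
is the value of `ω` on the half-edge by which the walk leaves `vᵢ`. -/
def tensionSum {G : Type*} [AddCommGroup G] (ω : E → Bool → ℤˣ) (f : E → G) :
    ∀ {u v : V}, Γ.Walk u v → G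
  | _, _, .nil _ => 0
  | _, _, .cons e d p => ((ω e d : ℤ) • f e) + ((Γ.sign e : ℤ) • tensionSum ω f p)

/-- `Q` is the reverse of the walk `P`. -/
def IsReverseOf {u v : V} (Q : Γ.Walk v u) (P : Γ.Walk u v) : Prop :=
  Q.steps = P.steps.reverse.map fun s => (s.1, !s.2)

end Walk

/-- A closed walk is a cycle if it is nontrivial, visits no vertex twice and
uses no edge twice. -/
def IsCycle (Γ : SGraph V E) {v : V} (W : Γ.Walk v v) : Prop :=
  W.edges ≠ [] ∧ W.srcs.Nodup ∧ W.edges.Nodup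

/-- A balanced (positive) cycle. -/
def IsBalancedCycle (Γ : SGraph V E) {v : V} (W : Γ.Walk v v) : Prop :=
  Γ.IsCycle W ∧ W.sgn = 1

/-- An unbalanced (negative) cycle. -/
def IsUnbalancedCycle (Γ : SGraph V E) {v : V} (W : Γ.Walk v v) : Prop :=
  Γ.IsCycle W ∧ W.sgn = -1

/-- A nontrivial walk that is a simple path (all visited vertices distinct). -/
def IsPathWalk (Γ : SGraph V E) {u v : V} (P : Γ.Walk u v) : Prop :=
  P.edges ≠ [] ∧ P.verts.Nodup

/-- A tight handcuff at `v`: two edge-disjoint unbalanced cycles sharing exactly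
the vertex `v`. -/
def IsTightHandcuff (Γ : SGraph V E) {v : V} (C₁ C₂ : Γ.Walk v v) : Prop :=
  Γ.IsUnbalancedCycle C₁ ∧ Γ.IsUnbalancedCycle C₂ ∧
    (∀ x ∈ C₁.srcs, x ∈ C₂.srcs → x = v) ∧ ∀ e ∈ C₁.edges, e ∉ C₂.edges

/-- A loose handcuff: two vertex-disjoint unbalanced cycles `C₁` (at `u`) and
`C₂` (at `w`) joined by a simple path `P` from `u` to `w` meeting the cycles
exactly in its endpoints. -/
def IsLooseHandcuff (Γ : SGraph V E) {u w : V} (C₁ : Γ.Walk u u) (P : Γ.Walk u w)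
    (C₂ : Γ.Walk w w) : Prop :=
  Γ.IsUnbalancedCycle C₁ ∧ Γ.IsUnbalancedCycle C₂ ∧ Γ.IsPathWalk P ∧
    (∀ x ∈ C₁.srcs, x ∉ C₂.srcs) ∧
    (∀ x ∈ P.verts, x ∈ C₁.srcs → x = u) ∧
    (∀ x ∈ P.verts, x ∈ C₂.srcs → x = w) ∧
    ∀ e ∈ P.edges, e ∉ C₁.edges ∧ e ∉ C₂.edges

/-- The canonical closed walks traversing a circuit of the signed graph:
a balanced cycle, a tight handcuff `C₁ * C₂`, or a loose handcuff
`C₁ * P * C₂ * P⁻¹` (the circuit path edges being used twice). -/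
def IsBasicCircuitWalk (Γ : SGraph V E) {v : V} (W : Γ.Walk v v) : Prop :=
  Γ.IsBalancedCycle W ∨
    (∃ C₁ C₂ : Γ.Walk v v, Γ.IsTightHandcuff C₁ C₂ ∧ W = C₁.append C₂) ∨
    ∃ (w : V) (C₁ : Γ.Walk v v) (P : Γ.Walk v w) (C₂ : Γ.Walk w w) (Q : Γ.Walk w v),
      Γ.IsLooseHandcuff C₁ P C₂ ∧ Q.IsReverseOf P ∧
        W = C₁.append (P.append (C₂.append Q))

/-- A circuit walk: a rotation of a basic circuit walk. -/
def IsCircuitWalk (Γ : SGraph V E) {v : V} (W : Γ.Walk v v) : Prop :=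
  ∃ (u : V) (A : Γ.Walk u v) (B : Γ.Walk v u),
    W = B.append A ∧ Γ.IsBasicCircuitWalk (A.append B)

/-- `e` is a circuit path edge: it lies on the connecting path of an unbalanced
loose handcuff. -/
def IsCircuitPathEdge (Γ : SGraph V E) (e : E) : Prop :=
  ∃ (u w : V) (C₁ : Γ.Walk u u) (P : Γ.Walk u w) (C₂ : Γ.Walk w w),
    Γ.IsLooseHandcuff C₁ P C₂ ∧ e ∈ P.edges

/-- Adjacency via an edge. -/
def Adj (Γ : SGraph V E) (a b : V) : Prop := ∃ e, Γ.ends e = (a, b) ∨ Γ.ends e = (b, a)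

/-- The set of connected components. -/
def Components (Γ : SGraph V E) : Type _ := Quot Γ.Adj

/-- The connected component of a vertex. -/
def comp (Γ : SGraph V E) (v : V) : Γ.Components := Quot.mk _ v

/-- The number `k(Γ)` of connected components. -/
def kAll (Γ : SGraph V E) : ℕ := Nat.card Γ.Components

/-- A connected component is balanced if every cycle it contains is balanced. -/
def IsBalancedComponent (Γ : SGraph V E) (c : Γ.Components) : Prop :=
  ∀ v : V, Γ.comp v = c → ∀ W : Γ.Walk v v, Γ.IsCycle W → W.sgn = 1

/-- The number `k_b(Σ)` of balanced connected components. -/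
def kb (Γ : SGraph V E) : ℕ := Nat.card {c : Γ.Components // Γ.IsBalancedComponent c}

/-- The number `k_u(Σ)` of unbalanced connected components. -/
def ku (Γ : SGraph V E) : ℕ := Nat.card {c : Γ.Components // ¬ Γ.IsBalancedComponent c}

/-- A signed graph is balanced if all its cycles are balanced. -/
def Balanced (Γ : SGraph V E) : Prop :=
  ∀ (v : V) (W : Γ.Walk v v), Γ.IsCycle W → W.sgn = 1

/-- A signed graph is connected if it has exactly one connected component. -/
def Connected (Γ : SGraph V E) : Prop := Γ.kAll = 1

/-- The spanning subgraph `Σ \ Aᶜ` with edge set `A`. -/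
def restrict (Γ : SGraph V E) (A : Set E) : SGraph V A :=
  { ends := fun e => Γ.ends e, sign := fun e => Γ.sign e }

/-- The signed Tutte polynomial (as a function of `x`, `y`, `z`):
`T_Σ(X,Y,Z) = Σ_{A⊆E} (X−1)^{k(Σ\Aᶜ)−k(Σ)} (Y−1)^{|A|−|V|+k_b(Σ\Aᶜ)} (Z−1)^{k_u(Σ\Aᶜ)}`. -/
def signedTutte {K : Type*} [CommRing K] (Γ : SGraph V E) (x y z : K) : K :=
  ∑ᶠ A : Finset E,
    (x - 1) ^ ((Γ.restrict (A : Set E)).kAll - Γ.kAll) *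
      (y - 1) ^ ((A.card + (Γ.restrict (A : Set E)).kb) - Nat.card V) *
        (z - 1) ^ (Γ.restrict (A : Set E)).ku

/-- Deletion of an edge. -/
def deleteEdge (Γ : SGraph V E) (e : E) : SGraph V {e' : E // e' ≠ e} :=
  { ends := fun e' => Γ.ends e'.1, sign := fun e' => Γ.sign e'.1 }

/-- The relation identifying the two endpoints of `e`. -/
def contractRel (Γ : SGraph V E) (e : E) (a b : V) : Prop := (a, b) = Γ.ends e

/-- Contraction of an edge: the two endpoints are identified and the edge is
deleted.  (For a loop this is just deletion, as the identification is trivial.) -/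
def contract (Γ : SGraph V E) (e : E) : SGraph (Quot (Γ.contractRel e)) {e' : E // e' ≠ e} :=
  { ends := fun e' => (Quot.mk _ (Γ.ends e'.1).1, Quot.mk _ (Γ.ends e'.1).2),
    sign := fun e' => Γ.sign e'.1 }

/-- `e` is a bridge: its deletion increases the number of connected components. -/
def IsBridge (Γ : SGraph V E) (e : E) : Prop := Γ.kAll < (Γ.deleteEdge e).kAll

/-- An orientation of the half-edges, compatible with the signature. -/
def IsCompatible (Γ : SGraph V E) (ω : E → Bool → ℤˣ) : Prop :=
  ∀ e, Γ.sign e = -(ω e true * ω e false)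

/-- A `G`-flow: Kirchhoff's law holds at every vertex. -/
def IsFlow (Γ : SGraph V E) (ω : E → Bool → ℤˣ) {G : Type*} [AddCommGroup G]
    (f : E → G) : Prop :=
  ∀ v : V,
    (∑ᶠ e : E, ((if Γ.endpt e true = v then (ω e true : ℤ) • f e else 0) +
      (if Γ.endpt e false = v then (ω e false : ℤ) • f e else 0))) = 0

/-- A `G`-tension: the alternating sum along every circuit walk vanishes. -/
def IsTension (Γ : SGraph V E) (ω : E → Bool → ℤˣ) {G : Type*} [AddCommGroup G]
    (f : E → G) : Prop :=
  ∀ (v : V) (W : Γ.Walk v v), Γ.IsCircuitWalk W → W.tensionSum ω f = 0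

end SGraph

/-- The doubling homomorphism `x ↦ x + x = 2x` of an abelian group. -/
def doubleHom (G : Type*) [AddCommGroup G] : G →+ G :=
  AddMonoidHom.mk' (fun x => x + x) (fun a b => add_add_add_comm a b a b)

/-- The subgroup `2G = {2x : x ∈ G}`. -/
def twoG (G : Type*) [AddCommGroup G] : AddSubgroup G := (doubleHom G).range

/-- The `2`-torsion subgroup `G₂ = {x ∈ G : 2x = 0}`. -/
def torsion2 (G : Type*) [AddCommGroup G] : AddSubgroup G := (doubleHom G).ker

namespace SGraph

variable {V E : Type*}

/-- A `G`-potential difference: a `G`-tension whose sum around every unbalanced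
cycle lies in `2G`. -/
def IsPotentialDifference (Γ : SGraph V E) (ω : E → Bool → ℤˣ) {G : Type*} [AddCommGroup G]
    (f : E → G) : Prop :=
  Γ.IsTension ω f ∧
    ∀ (v : V) (W : Γ.Walk v v), Γ.IsUnbalancedCycle W → W.edgeSum f ∈ twoG G

end SGraph

namespace SGraph

variable {V E : Type*}

/-- Proper coloring by elements of a set `X` with involution `ι`: adjacent
endpoints of a positive edge get different colors, and for a negative edge the
`ι`-image of one endpoint's color differs from the other endpoint's color. -/
def IsProperInvColoring (Γ : SGraph V E) {X : Type*} (ι : X → X) (f : V → X) : Prop :=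
  ∀ e : E, (Γ.sign e = 1 → f ((Γ.ends e).1) ≠ f ((Γ.ends e).2)) ∧
    (Γ.sign e = -1 → ι (f ((Γ.ends e).1)) ≠ f ((Γ.ends e).2))

/-- A proper `G`-coloring: for every edge `e = uv`, `f(u) ≠ f(v)` if `e` is
positive and `-f(u) ≠ f(v)` if `e` is negative, i.e. `σ(e)•f(u) ≠ f(v)`. -/
def IsProperColoring (Γ : SGraph V E) {G : Type*} [AddCommGroup G] (f : V → G) : Prop :=
  ∀ e : E, ((Γ.sign e : ℤ) • f ((Γ.ends e).1)) ≠ f ((Γ.ends e).2)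

/-- Zaslavsky's proper `n`-coloring: colors in `{0, ±1, …, ±n}` with
`f(u) ≠ σ(e)·f(v)` for every edge `e = uv`. -/
def IsProperNColoring (Γ : SGraph V E) (n : ℕ) (f : V → ℤ) : Prop :=
  (∀ v, |f v| ≤ (n : ℤ)) ∧
    ∀ e : E, f ((Γ.ends e).1) ≠ (Γ.sign e : ℤ) * f ((Γ.ends e).2)

/-- `T ⊆ E` is a spanning tree: the spanning subgraph `(V,T)` is connected and
contains no cycle. -/
def IsSpanningTree (Γ : SGraph V E) (T : Set E) : Prop :=
  (Γ.restrict T).Connected ∧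
    ∀ (v : V) (W : (Γ.restrict T).Walk v v), ¬ (Γ.restrict T).IsCycle W

/-- A connected basis of a connected signed graph: a spanning tree if `Σ` is
balanced; otherwise a spanning tree plus one extra edge closing an unbalanced
cycle. -/
def IsConnectedBasis (Γ : SGraph V E) (B : Set E) : Prop :=
  (Γ.Balanced ∧ Γ.IsSpanningTree B) ∨
    (¬ Γ.Balanced ∧ ∃ (T : Set E) (e : E), Γ.IsSpanningTree T ∧ e ∉ T ∧ B = insert e T ∧
      ∀ (v : V) (W : (Γ.restrict B).Walk v v), (Γ.restrict B).IsCycle W → W.sgn = -1)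

/-- Switching at a vertex `v`: the sign of every non-loop edge incident with `v`
is negated; loops keep their sign. -/
def switchAt (Γ : SGraph V E) (v : V) : SGraph V E :=
  { ends := Γ.ends,
    sign := fun e => if ((Γ.ends e).1 = v ↔ (Γ.ends e).2 = v) then Γ.sign e else -Γ.sign e }

/-- Switching at a set `S` of vertices (the composite of the switchings at the
vertices of `S`): the sign of an edge is negated iff exactly one of its
endpoints lies in `S`. -/
def switchSet (Γ : SGraph V E) (S : Set V) : SGraph V E :=
  { ends := Γ.ends,
    sign := fun e => if ((Γ.ends e).1 ∈ S ↔ (Γ.ends e).2 ∈ S) then Γ.sign e else -Γ.sign e }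

/-- Isomorphism of signed graphs (as undirected signed multigraphs). -/
def Iso {V₁ E₁ V₂ E₂ : Type*} (Γ₁ : SGraph V₁ E₁) (Γ₂ : SGraph V₂ E₂) : Prop :=
  ∃ (φ : V₁ ≃ V₂) (ψ : E₁ ≃ E₂), ∀ e : E₁,
    (Γ₂.ends (ψ e) = (φ (Γ₁.ends e).1, φ (Γ₁.ends e).2) ∨
      Γ₂.ends (ψ e) = (φ (Γ₁.ends e).2, φ (Γ₁.ends e).1)) ∧
    Γ₂.sign (ψ e) = Γ₁.sign e

/-- Switching equivalence: isomorphism after switching at a set of vertices. -/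
def SwitchEquiv {V₁ E₁ V₂ E₂ : Type*} (Γ₁ : SGraph V₁ E₁) (Γ₂ : SGraph V₂ E₂) : Prop :=
  ∃ S : Set V₁, Iso (Γ₁.switchSet S) Γ₂

/-- Disjoint union of signed graphs. -/
def disjUnion {V₁ E₁ V₂ E₂ : Type*} (Γ₁ : SGraph V₁ E₁) (Γ₂ : SGraph V₂ E₂) :
    SGraph (V₁ ⊕ V₂) (E₁ ⊕ E₂) where
  ends := fun e => match e with
    | .inl e => (Sum.inl (Γ₁.ends e).1, Sum.inl (Γ₁.ends e).2)
    | .inr e => (Sum.inr (Γ₂.ends e).1, Sum.inr (Γ₂.ends e).2)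
  sign := fun e => match e with
    | .inl e => Γ₁.sign e
    | .inr e => Γ₂.sign e

/-- The difference operator `δ : G^V → G^E`,
`(δg)(e) = ω(v,e)·g(v) + ω(u,e)·g(u)` for `e = uv`. -/
def deltaHom (Γ : SGraph V E) (ω : E → Bool → ℤˣ) (G : Type*) [AddCommGroup G] :
    (V → G) →+ (E → G) :=
  AddMonoidHom.mk'
    (fun g e => (ω e true : ℤ) • g ((Γ.ends e).1) + (ω e false : ℤ) • g ((Γ.ends e).2))
    (by
      intro a b
      funext e
      simp only [Pi.add_apply, smul_add]
      abel)

end SGraph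

end SignedGraphs

/-!
Flows of `Σ` are the kernel of the boundary map `∂ : G^E → G^V`, so their number is
`|G|^|E| · |G^V : im ∂| / |G|^|V|`. Fix a base vertex in each component and sign every vertex `v`
by `s(v)`, the sign of a walk from the base to `v`. Then `im ∂` consists of the `g` whose switched
sum `Σ_{v ∈ c} s(v) g(v)` vanishes on every balanced component `c` (there `s` is a switching
function making all edges positive) and lies in `2G` on every unbalanced one (a closed walk of
sign `-1` through the base carries any `2y` onto it). Hence `im ∂` has index
`|G|^{k_b} |G : 2G|^{k_u}`. Flows supported in `A` are the flows of `Σ \ Aᶜ`, and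
inclusion–exclusion over supports gives the expansion.
-/

noncomputable section

namespace SGraph

variable {V E : Type*} {Γ : SGraph V E}

namespace Walk

lemma verts_ne_nil : ∀ {u v : V} (W : Γ.Walk u v), W.verts ≠ []
  | _, _, .nil _ => List.cons_ne_nil _ _
  | _, _, .cons _ _ _ => List.cons_ne_nil _ _

@[simp] lemma srcs_nil (v : V) : (nil v : Γ.Walk v v).srcs = [] := rfl

@[simp] lemma srcs_cons (e : E) (d : Bool) {w : V} (p : Γ.Walk (Γ.endpt e (!d)) w) :
    (cons e d p).srcs = Γ.endpt e d :: p.srcs := by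
  simp [srcs, verts, List.dropLast_cons_of_ne_nil p.verts_ne_nil]

@[simp] lemma edges_nil (v : V) : (nil v : Γ.Walk v v).edges = [] := rfl

@[simp] lemma edges_cons (e : E) (d : Bool) {w : V} (p : Γ.Walk (Γ.endpt e (!d)) w) :
    (cons e d p).edges = e :: p.edges := rfl

@[simp] lemma sgn_nil (v : V) : (nil v : Γ.Walk v v).sgn = 1 := rfl

@[simp] lemma sgn_cons (e : E) (d : Bool) {w : V} (p : Γ.Walk (Γ.endpt e (!d)) w) :
    (cons e d p).sgn = Γ.sign e * p.sgn := rfl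

@[simp] lemma cons_append (e : E) (d : Bool) {w x : V} (p : Γ.Walk (Γ.endpt e (!d)) w)
    (q : Γ.Walk w x) : (cons e d p).append q = cons e d (p.append q) := rfl

@[simp] lemma edges_append : ∀ {u v w : V} (p : Γ.Walk u v) (q : Γ.Walk v w),
    (p.append q).edges = p.edges ++ q.edges
  | _, _, _, .nil _, _ => rfl
  | _, _, _, .cons e _ p, q => congrArg (e :: ·) (edges_append p q)

@[simp] lemma sgn_append : ∀ {u v w : V} (p : Γ.Walk u v) (q : Γ.Walk v w),
    (p.append q).sgn = p.sgn * q.sgn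
  | _, _, _, .nil _, _ => (one_mul _).symm
  | _, _, _, .cons e _ p, q => by simp [sgn_append p q, mul_assoc]

lemma verts_append : ∀ {u v w : V} (p : Γ.Walk u v) (q : Γ.Walk v w),
    (p.append q).verts = p.srcs ++ q.verts
  | _, _, _, .nil _, _ => rfl
  | _, _, _, .cons e d p, q => by simp [verts, verts_append p q]

@[simp] lemma srcs_append {u v w : V} (p : Γ.Walk u v) (q : Γ.Walk v w) :
    (p.append q).srcs = p.srcs ++ q.srcs := by
  simp [srcs, verts_append, List.dropLast_append_of_ne_nil q.verts_ne_nil]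

def copy {u v u' v' : V} (W : Γ.Walk u v) (hu : u = u') (hv : v = v') : Γ.Walk u' v' :=
  hu ▸ hv ▸ W

@[simp] lemma sgn_copy {u v u' v' : V} (W : Γ.Walk u v) (hu : u = u') (hv : v = v') :
    (W.copy hu hv).sgn = W.sgn := by subst hu hv; rfl

@[simp] lemma edges_copy {u v u' v' : V} (W : Γ.Walk u v) (hu : u = u') (hv : v = v') :
    (W.copy hu hv).edges = W.edges := by subst hu hv; rfl

def single (e : E) (d : Bool) : Γ.Walk (Γ.endpt e d) (Γ.endpt e (!d)) := cons e d (nil _)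

def reverse : ∀ {u v : V}, Γ.Walk u v → Γ.Walk v u
  | _, _, .nil x => nil x
  | _, _, .cons e d p => p.reverse.append ((single e (!d)).copy rfl (by rw [Bool.not_not]))

@[simp] lemma sgn_reverse : ∀ {u v : V} (W : Γ.Walk u v), W.reverse.sgn = W.sgn
  | _, _, .nil _ => rfl
  | _, _, .cons e d p => by simp [reverse, single, sgn_reverse p, mul_comm]

end Walk

lemma comp_endpt (e : E) (d : Bool) : Γ.comp (Γ.endpt e d) = Γ.comp (Γ.endpt e (!d)) := by
  have h : Γ.comp (Γ.endpt e true) = Γ.comp (Γ.endpt e false) := Quot.sound ⟨e, Or.inl rfl⟩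
  cases d
  exacts [h.symm, h]

lemma comp_eq_of_walk : ∀ {u v : V}, Γ.Walk u v → Γ.comp u = Γ.comp v
  | _, _, .nil _ => rfl
  | _, _, .cons e d p => (comp_endpt e d).trans (comp_eq_of_walk p)

lemma nonempty_walk_of_comp_eq {u v : V} (h : Γ.comp u = Γ.comp v) :
    Nonempty (Γ.Walk u v) := by
  obtain hr := Quot.eq.mp h
  clear h
  induction hr with
  | rel a b hab =>
      obtain ⟨e, he | he⟩ := hab
      · exact ⟨(Walk.single e true).copy (by simp [endpt, he]) (by simp [endpt, he])⟩
      · exact ⟨(Walk.single e false).copy (by simp [endpt, he]) (by simp [endpt, he])⟩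
  | refl a => exact ⟨.nil a⟩
  | symm a b _ ih => exact ⟨ih.some.reverse⟩
  | trans a b c _ _ ih₁ ih₂ => exact ⟨ih₁.some.append ih₂.some⟩

namespace Walk

lemma sgn_eq_one_of_edges_eq_nil {u : V} (W : Γ.Walk u u) (h : W.edges = []) : W.sgn = 1 := by
  cases W with
  | nil => rfl
  | cons => simp at h

lemma exists_eq_append_of_mem_srcs : ∀ {u v : V} (W : Γ.Walk u v) {x : V}, x ∈ W.srcs →
    ∃ (A : Γ.Walk u x) (B : Γ.Walk x v), W = A.append B ∧ B.edges ≠ []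
  | _, _, .nil _, _, hx => by simp at hx
  | _, _, .cons e d p, x, hx => by
      by_cases h : Γ.endpt e d = x
      · subst h
        exact ⟨nil _, cons e d p, rfl, by simp⟩
      · obtain ⟨A, B, rfl, hB⟩ := exists_eq_append_of_mem_srcs p
          ((List.mem_cons.mp (srcs_cons e d p ▸ hx)).resolve_left (Ne.symm h))
        exact ⟨cons e d A, B, rfl, hB⟩

lemma exists_eq_append_cons_of_mem_edges : ∀ {u v : V} (W : Γ.Walk u v) {e : E},
    e ∈ W.edges → ∃ (d : Bool) (A : Γ.Walk u (Γ.endpt e d)) (B : Γ.Walk (Γ.endpt e (!d)) v),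
      W = A.append (cons e d B)
  | _, _, .nil _, _, he => by simp at he
  | _, _, .cons e' d' p, e, he => by
      by_cases h : e' = e
      · subst h
        exact ⟨d', nil _, p, rfl⟩
      · obtain ⟨d, A, B, rfl⟩ := exists_eq_append_cons_of_mem_edges p
          ((List.mem_cons.mp (edges_cons e' d' p ▸ he)).resolve_left (Ne.symm h))
        exact ⟨d, cons e' d' A, B, rfl⟩

/-- Once repeated vertices are excluded, a repeated edge is traversed in opposite directions,
so its two signs cancel. -/
theorem exists_sgn_eq_mul_of_not_nodup : ∀ {u v : V} (W : Γ.Walk u v),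
    ¬ (W.srcs.Nodup ∧ W.edges.Nodup) →
    ∃ (x : V) (C : Γ.Walk x x) (D : Γ.Walk u v), Γ.comp x = Γ.comp u ∧
      C.edges.length < W.edges.length ∧ D.edges.length < W.edges.length ∧
      W.sgn = C.sgn * D.sgn
  | _, _, .nil _, h => by simp at h
  | _, _, .cons e d p, h => by
      by_cases hsrc : Γ.endpt e d ∈ p.srcs
      · obtain ⟨C, D, rfl, hD⟩ := p.exists_eq_append_of_mem_srcs hsrc
        have := List.length_pos_iff.mpr hD
        exact ⟨_, cons e d C, D, rfl, by simp; omega, by simp, by simp [mul_assoc]⟩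
      by_cases hedge : e ∈ p.edges
      · obtain ⟨d', C, D, rfl⟩ := p.exists_eq_append_cons_of_mem_edges hedge
        obtain rfl : d' = !d := by
          cases d <;> cases d' <;> simp_all
        refine ⟨_, C, D.copy (by rw [Bool.not_not]) rfl, (comp_endpt e d).symm, by simp,
          by simp; omega, ?_⟩
        simp only [sgn_cons, sgn_append, sgn_copy]
        rw [mul_left_comm, ← mul_assoc (Γ.sign e), Int.units_mul_self, one_mul]
      obtain ⟨x, C, D, hx, hC, hD, hW⟩ :=
        p.exists_sgn_eq_mul_of_not_nodup (by simp_all [List.nodup_cons])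
      refine ⟨x, C, cons e d D, hx.trans (comp_endpt e d).symm, by simp; omega, by simp; omega,
        ?_⟩
      rw [sgn_cons, sgn_cons, hW, mul_left_comm]

theorem sgn_eq_one_of_isBalancedComponent {u : V} (hu : Γ.IsBalancedComponent (Γ.comp u))
    (W : Γ.Walk u u) : W.sgn = 1 := by
  induction hn : W.edges.length using Nat.strong_induction_on generalizing u with
  | _ n ih =>
    by_cases hs : W.srcs.Nodup ∧ W.edges.Nodup
    · by_cases he : W.edges = []
      · exact W.sgn_eq_one_of_edges_eq_nil he
      · exact hu u rfl W ⟨he, hs⟩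
    · obtain ⟨x, C, D, hx, hC, hD, hW⟩ := W.exists_sgn_eq_mul_of_not_nodup hs
      rw [hW, ih _ (hn ▸ hC) (hx ▸ hu) C rfl, ih _ (hn ▸ hD) hu D rfl, one_mul]

theorem sgn_eq_sgn_of_isBalancedComponent {u v : V} (hu : Γ.IsBalancedComponent (Γ.comp u))
    (W P : Γ.Walk u v) : W.sgn = P.sgn := by
  have h := sgn_eq_one_of_isBalancedComponent hu (W.append P.reverse)
  rwa [sgn_append, sgn_reverse, mul_eq_one_iff_eq_inv, Int.units_inv_eq_self] at h

theorem exists_sgn_eq_neg_one_of_not_isBalancedComponent {w : V}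
    (hw : ¬ Γ.IsBalancedComponent (Γ.comp w)) : ∃ W : Γ.Walk w w, W.sgn = -1 := by
  simp only [IsBalancedComponent, not_forall] at hw
  obtain ⟨v, hv, C, -, hC⟩ := hw
  obtain ⟨P⟩ := nonempty_walk_of_comp_eq hv.symm
  refine ⟨P.append (C.append P.reverse), ?_⟩
  rw [sgn_append, sgn_append, sgn_reverse, (Int.units_eq_one_or C.sgn).resolve_left hC,
    neg_one_mul, mul_neg, Int.units_mul_self]

end Walk

section Boundary

def flowAlong {G : Type*} [AddCommGroup G] (ω : E → Bool → ℤˣ) :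
    ∀ {a b : V}, Γ.Walk a b → G → E → G
  | _, _, .nil _, _ => 0
  | _, _, .cons e d p, x => Pi.single e (-((ω e d : ℤ) • x)) + flowAlong ω p ((Γ.sign e : ℤ) • x)

lemma single_eq_flowAlong {G : Type*} [AddCommGroup G] (ω : E → Bool → ℤˣ) (e : E) (y : G) :
    Pi.single e y = flowAlong ω (Walk.single (Γ := Γ) e true) (-((ω e true : ℤ) • y)) := by
  simp [flowAlong, Walk.single, smul_smul, ← Units.val_mul, Int.units_mul_self]

variable (Γ) (ω : E → Bool → ℤˣ) (G : Type*) [AddCommGroup G] [Fintype E]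

def boundary : (E → G) →+ (V → G) where
  toFun f := ∑ e, (Pi.single (Γ.endpt e true) ((ω e true : ℤ) • f e) +
    Pi.single (Γ.endpt e false) ((ω e false : ℤ) • f e))
  map_zero' := by simp
  map_add' f g := by
    simp only [Pi.add_apply, smul_add, Pi.single_add, ← Finset.sum_add_distrib]
    exact Finset.sum_congr rfl fun _ _ => by abel

variable {Γ ω G}

lemma isFlow_iff_boundary_eq_zero (f : E → G) : Γ.IsFlow ω f ↔ boundary Γ ω G f = 0 := by
  simp [IsFlow, boundary, funext_iff, finsum_eq_sum_of_fintype, Finset.sum_apply,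
    Pi.single_apply, eq_comm]

lemma boundary_single (e : E) (x : G) :
    boundary Γ ω G (Pi.single e x) = Pi.single (Γ.endpt e true) ((ω e true : ℤ) • x) +
      Pi.single (Γ.endpt e false) ((ω e false : ℤ) • x) := by
  simp only [boundary, AddMonoidHom.coe_mk, ZeroHom.coe_mk]
  rw [Finset.sum_eq_single e (fun e' _ he' => by simp [Pi.single_eq_of_ne he']) (by simp)]
  simp

lemma boundary_single_step (hω : Γ.IsCompatible ω) (e : E) (d : Bool) (x : G) :
    boundary Γ ω G (Pi.single e (-((ω e d : ℤ) • x))) =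
      Pi.single (Γ.endpt e (!d)) ((Γ.sign e : ℤ) • x) - Pi.single (Γ.endpt e d) x := by
  have hσ : (Γ.sign e : ℤ) = -((ω e true : ℤ) * ω e false) := by rw [hω e]; push_cast; ring
  cases d <;> simp [boundary_single, smul_smul, hσ, ← Units.val_mul, mul_comm, sub_eq_add_neg,
    Pi.single_neg, add_comm]

theorem boundary_flowAlong (hω : Γ.IsCompatible ω) : ∀ {a b : V} (W : Γ.Walk a b) (x : G),
    boundary Γ ω G (flowAlong ω W x) = Pi.single b ((W.sgn : ℤ) • x) - Pi.single a x
  | _, _, .nil _, x => by simp [flowAlong]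
  | _, _, .cons e d p, x => by
      rw [flowAlong, map_add, boundary_single_step hω, boundary_flowAlong hω p, Walk.sgn_cons,
        Units.val_mul, mul_comm, mul_smul]
      abel

end Boundary

section Switching

variable (Γ)

instance [Finite V] : Fintype Γ.Components := Fintype.ofFinite (Quot Γ.Adj)

def base (c : Γ.Components) : V := (Quot.exists_rep c).choose

lemma comp_base (c : Γ.Components) : Γ.comp (Γ.base c) = c := (Quot.exists_rep c).choose_spec

def baseWalk (v : V) : Γ.Walk (Γ.base (Γ.comp v)) v :=
  (nonempty_walk_of_comp_eq (Γ.comp_base (Γ.comp v))).some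

/-- On a balanced component, a switching function making every edge positive. -/
def switching (v : V) : ℤˣ := (Γ.baseWalk v).sgn

variable {Γ}

lemma switching_mul_sgn {u v : V} (hu : Γ.IsBalancedComponent (Γ.comp u)) (W : Γ.Walk u v) :
    Γ.switching u * W.sgn = Γ.switching v := by
  have huv := comp_eq_of_walk W
  have hbal : Γ.IsBalancedComponent (Γ.comp (Γ.base (Γ.comp v))) := by
    rwa [comp_base, ← huv]
  have := Walk.sgn_eq_sgn_of_isBalancedComponent hbal
    (((Γ.baseWalk u).copy (by rw [huv]) rfl).append W) (Γ.baseWalk v)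
  rwa [Walk.sgn_append, Walk.sgn_copy] at this

variable (Γ) (G : Type*) [AddCommGroup G]

def switchedSum [Fintype V] : (V → G) →+ (Γ.Components → G) where
  toFun g c := ∑ v with Γ.comp v = c, (Γ.switching v : ℤ) • g v
  map_zero' := by funext c; simp
  map_add' f g := by funext c; simp [smul_add, Finset.sum_add_distrib]

def componentConstraint (c : Γ.Components) : AddSubgroup G :=
  if Γ.IsBalancedComponent c then ⊥ else twoG G

variable {Γ G} [Fintype V]

lemma switchedSum_single (v : V) (x : G) :
    switchedSum Γ G (Pi.single v x) = Pi.single (Γ.comp v) ((Γ.switching v : ℤ) • x) := by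
  funext c
  simp [switchedSum, Pi.single_apply, eq_comm]

lemma switchedSum_surjective : Function.Surjective (switchedSum Γ G) := by
  intro h
  refine ⟨∑ c, Pi.single (Γ.base c) ((Γ.switching (Γ.base c) : ℤ) • h c), ?_⟩
  simp only [map_sum, switchedSum_single, comp_base, smul_smul, ← Units.val_mul,
    Int.units_mul_self, Units.val_one, one_smul, Finset.univ_sum_single]

lemma sum_single_base_switchedSum (g : V → G) :
    ∑ c, Pi.single (Γ.base c) (switchedSum Γ G g c) =
      ∑ v, (Pi.single (Γ.base (Γ.comp v)) ((Γ.switching v : ℤ) • g v) : V → G) := by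
  rw [← Finset.sum_fiberwise Finset.univ Γ.comp]
  refine Finset.sum_congr rfl fun c _ => ?_
  exact (map_sum (AddMonoidHom.single (fun _ : V => G) (Γ.base c)) _ _).trans
    (Finset.sum_congr rfl fun v hv => by rw [(Finset.mem_filter.1 hv).2]; rfl)

lemma index_pi_componentConstraint :
    (AddSubgroup.pi Set.univ (componentConstraint Γ G)).index =
      Nat.card G ^ Γ.kb * (twoG G).index ^ Γ.ku := by
  simp only [AddSubgroup.index_pi, componentConstraint, apply_ite AddSubgroup.index,
    AddSubgroup.index_bot, Finset.prod_ite, Finset.prod_const, kb, ku, Nat.card_eq_fintype_card,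
    Fintype.card_subtype]

end Switching

end SGraph

lemma Int.even_coe_units_sub (u v : ℤˣ) : Even ((u : ℤ) - v) := by
  rcases Int.units_eq_one_or u with rfl | rfl <;> rcases Int.units_eq_one_or v with rfl | rfl <;>
    decide

namespace SGraph

variable {V E : Type*} {Γ : SGraph V E} {ω : E → Bool → ℤˣ} {G : Type*} [AddCommGroup G]
  [Fintype E]

lemma switchedSum_boundary_flowAlong_mem [Fintype V] (hω : Γ.IsCompatible ω) {a b : V}
    (W : Γ.Walk a b) (x : G) :
    switchedSum Γ G (boundary Γ ω G (flowAlong ω W x)) ∈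
      AddSubgroup.pi Set.univ (componentConstraint Γ G) := by
  rw [boundary_flowAlong hω, map_sub, switchedSum_single, switchedSum_single,
    ← comp_eq_of_walk W, ← Pi.single_sub, smul_smul, ← sub_smul, ← Units.val_mul,
    AddSubgroup.mem_pi]
  intro c _
  by_cases hc : c = Γ.comp a
  · subst hc
    rw [Pi.single_eq_same, componentConstraint]
    split_ifs with hbal
    · rw [← switching_mul_sgn hbal W, mul_assoc, Int.units_mul_self, mul_one, sub_self,
        zero_smul]
      exact zero_mem _
    · obtain ⟨k, hk⟩ := Int.even_coe_units_sub (Γ.switching b * W.sgn) (Γ.switching a)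
      rw [hk, add_smul]
      exact ⟨k • x, rfl⟩
  · rw [Pi.single_eq_of_ne hc]
    exact zero_mem _

lemma single_base_mem_range_boundary (hω : Γ.IsCompatible ω) {c : Γ.Components} {y : G}
    (hy : y ∈ componentConstraint Γ G c) :
    Pi.single (Γ.base c) y ∈ (boundary Γ ω G).range := by
  rw [componentConstraint] at hy
  split_ifs at hy with hbal
  · rw [AddSubgroup.mem_bot.mp hy, Pi.single_zero]
    exact zero_mem _
  · obtain ⟨z, rfl⟩ := hy
    obtain ⟨W, hW⟩ := Walk.exists_sgn_eq_neg_one_of_not_isBalancedComponent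
      (w := Γ.base c) (by rwa [comp_base])
    refine ⟨flowAlong ω W (-z), ?_⟩
    rw [boundary_flowAlong hω, hW, Pi.single_neg]
    simp [doubleHom, sub_eq_add_neg, ← Pi.single_add]

theorem range_boundary [Fintype V] (hω : Γ.IsCompatible ω) :
    (boundary Γ ω G).range =
      (AddSubgroup.pi Set.univ (componentConstraint Γ G)).comap (switchedSum Γ G) := by
  apply le_antisymm
  · rintro _ ⟨f, rfl⟩
    rw [← Finset.univ_sum_single f, map_sum]
    exact sum_mem fun e _ => by
      rw [single_eq_flowAlong]
      exact switchedSum_boundary_flowAlong_mem hω _ _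
  · intro g hg
    have hdecomp : g = ∑ v, (Pi.single v (g v) -
        Pi.single (Γ.base (Γ.comp v)) ((Γ.switching v : ℤ) • g v)) +
          ∑ c, Pi.single (Γ.base c) (switchedSum Γ G g c) := by
      rw [sum_single_base_switchedSum, Finset.sum_sub_distrib, Finset.univ_sum_single,
        sub_add_cancel]
    rw [hdecomp]
    refine add_mem (sum_mem fun v _ => ⟨flowAlong ω (Γ.baseWalk v) ((Γ.switching v : ℤ) • g v),
      ?_⟩) (sum_mem fun c _ => single_base_mem_range_boundary hω (hg c (Set.mem_univ c)))
    rw [boundary_flowAlong hω, ← switching, smul_smul, ← Units.val_mul, Int.units_mul_self,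
      Units.val_one, one_smul]

end SGraph

theorem AddMonoidHom.card_ker_mul_card_eq_card_mul_index_range {A B : Type*} [AddGroup A]
    [AddGroup B] (φ : A →+ B) : Nat.card φ.ker * Nat.card B = Nat.card A * φ.range.index := by
  rw [← φ.range.card_mul_index, ← AddSubgroup.index_ker, ← mul_assoc, AddSubgroup.card_mul_index]

lemma index_twoG_eq_div (G : Type*) [AddCommGroup G] [Finite G] :
    ((twoG G).index : ℚ) = Nat.card G / Nat.card (twoG G) := by
  rw [eq_div_iff (by exact_mod_cast Nat.card_pos.ne'), mul_comm]
  exact_mod_cast (twoG G).card_mul_index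

lemma twoG_zmod_three_eq_top : twoG (ZMod 3) = ⊤ :=
  AddMonoidHom.range_eq_top.mpr (by decide : ∀ x : ZMod 3, ∃ y, y + y = x)

namespace SGraph

variable {V E : Type*} {Γ : SGraph V E} {ω : E → Bool → ℤˣ} [Fintype V] [Fintype E]

theorem card_flows_mul_card_pow (hω : Γ.IsCompatible ω) (G : Type*) [AddCommGroup G] :
    Nat.card {f : E → G // Γ.IsFlow ω f} * Nat.card G ^ Nat.card V =
      Nat.card G ^ (Nat.card E + Γ.kb) * (twoG G).index ^ Γ.ku := by
  have hker : Nat.card {f : E → G // Γ.IsFlow ω f} = Nat.card (boundary Γ ω G).ker :=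
    Nat.card_congr (Equiv.subtypeEquivRight fun f => isFlow_iff_boundary_eq_zero f)
  rw [hker, ← Nat.card_fun, AddMonoidHom.card_ker_mul_card_eq_card_mul_index_range,
    range_boundary hω, AddSubgroup.index_comap_of_surjective _ switchedSum_surjective,
    index_pi_componentConstraint, Nat.card_fun, pow_add, mul_assoc]

/-- Count flows with values in `ZMod 3`, where `2G = G`: there is at least one. -/
lemma card_le_card_add_kb (hω : Γ.IsCompatible ω) : Nat.card V ≤ Nat.card E + Γ.kb := by
  have h := card_flows_mul_card_pow hω (ZMod 3)
  rw [twoG_zmod_three_eq_top, AddSubgroup.index_top, one_pow, mul_one, Nat.card_zmod] at h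
  have : 0 < Nat.card {f : E → ZMod 3 // Γ.IsFlow ω f} :=
    Nat.card_pos_iff.mpr ⟨⟨⟨0, by simp [IsFlow]⟩⟩, inferInstance⟩
  exact (Nat.pow_le_pow_iff_right (by norm_num)).mp (h ▸ Nat.le_mul_of_pos_left _ this)

theorem card_flows (hω : Γ.IsCompatible ω) (G : Type*) [AddCommGroup G] [Finite G] :
    (Nat.card {f : E → G // Γ.IsFlow ω f} : ℚ) =
      (Nat.card G : ℚ) ^ ((Nat.card E + Γ.kb) - Nat.card V) *
        ((Nat.card G : ℚ) / Nat.card (twoG G)) ^ Γ.ku := by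
  have h : (Nat.card {f : E → G // Γ.IsFlow ω f} : ℚ) * (Nat.card G : ℚ) ^ Nat.card V =
      (Nat.card G : ℚ) ^ (Nat.card E + Γ.kb) * ((twoG G).index : ℚ) ^ Γ.ku := by
    exact_mod_cast card_flows_mul_card_pow hω G
  rw [← index_twoG_eq_div]
  refine mul_right_cancel₀ (pow_ne_zero _ (by exact_mod_cast Nat.card_pos.ne')) (h.trans ?_)
  rw [mul_right_comm, ← pow_add, Nat.sub_add_cancel (card_le_card_add_kb hω)]

end SGraph

open Finset in
lemma Finset.sum_filter_superset_neg_one_pow {α : Type*} [Fintype α] [DecidableEq α]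
    (s : Finset α) :
    ∑ A with s ⊆ A, (-1 : ℤ) ^ (Fintype.card α - #A) = if s = univ then 1 else 0 :=
  calc ∑ A with s ⊆ A, (-1 : ℤ) ^ (Fintype.card α - #A) = ∑ B ∈ sᶜ.powerset, (-1 : ℤ) ^ #B :=
        sum_nbij' compl compl (fun A hA => by simpa using (mem_filter.mp hA).2)
          (fun B hB => by simpa [subset_compl_comm] using hB)
          (fun A _ => compl_compl A) (fun B _ => compl_compl B) (fun A _ => by rw [card_compl])
    _ = if s = univ then 1 else 0 := by simp [sum_powerset_neg_one_pow_card]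

open Finset in
theorem card_forall_ne_zero_eq_sum {E M : Type*} [Fintype E] [DecidableEq E] [Zero M] [Finite M]
    (P : (E → M) → Prop) :
    (Nat.card {f : E → M // P f ∧ ∀ e, f e ≠ 0} : ℤ) =
      ∑ A : Finset E, (-1 : ℤ) ^ (Fintype.card E - #A) *
        Nat.card {f : E → M // P f ∧ ∀ e ∉ A, f e = 0} := by
  have := Fintype.ofFinite M
  have hcard (Q : (E → M) → Prop) : (Nat.card {f // Q f} : ℤ) = ∑ f, if Q f then 1 else 0 := by
    rw [Nat.card_eq_fintype_card, Fintype.card_subtype, natCast_card_filter]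
  have hsupp (f : E → M) (A : Finset E) : (∀ e ∉ A, f e = 0) ↔ univ.filter (f · ≠ 0) ⊆ A := by
    simp [subset_iff, not_imp_comm]
  have huniv (f : E → M) : (∀ e, f e ≠ 0) ↔ univ.filter (f · ≠ 0) = univ := by
    simp [eq_univ_iff_forall]
  simp only [hcard, mul_sum, hsupp, huniv]
  rw [sum_comm]
  refine sum_congr rfl fun f _ => ?_
  by_cases hP : P f
  · simp [hP, ← sum_filter, sum_filter_superset_neg_one_pow]
  · simp [hP]

namespace SGraph

variable {V E : Type*} {Γ : SGraph V E} {ω : E → Bool → ℤˣ} {G : Type*} [AddCommGroup G]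

lemma isFlow_restrict_iff (A : Finset E) {f : E → G} (hf : ∀ e ∉ A, f e = 0) :
    (Γ.restrict A).IsFlow (fun e => ω e) (fun e => f e) ↔ Γ.IsFlow ω f := by
  refine forall_congr' fun v => ?_
  rw [finsum_eq_sum_of_fintype, finsum_eq_sum_of_support_subset _
    fun e he => Finset.mem_coe.mpr (by_contra fun hA => he (by simp [hf e hA])),
    ← Finset.sum_coe_sort A]
  rfl

lemma card_flows_supported (A : Finset E) :
    Nat.card {f : E → G // Γ.IsFlow ω f ∧ ∀ e ∉ A, f e = 0} =
      Nat.card {g : ↥(A : Set E) → G // (Γ.restrict A).IsFlow (fun e => ω e) g} := by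
  refine Nat.card_congr
    { toFun := fun f => ⟨fun e => f.1 e, (isFlow_restrict_iff A f.2.2).mpr f.2.1⟩
      invFun := fun g =>
        ⟨fun e => if h : e ∈ A then g.1 ⟨e, h⟩ else 0, ?_, fun e he => dif_neg he⟩
      left_inv := fun f => ?_
      right_inv := fun g => ?_ }
  · exact (isFlow_restrict_iff A fun e he => dif_neg he).mp (by simpa using g.2)
  · ext e
    by_cases h : e ∈ A
    · simp [h]
    · simp [h, f.2.2 e h]
  · ext e
    simp

end SGraph

end

section Statement

open SGraph

/-- Theorem 5.2: subset expansion for the number of nowhere-zero `G`-flows. -/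
theorem card_nowhereZero_flows_subset_expansion
    (V E : Type) [Finite V] [Fintype E] (Γ : SGraph V E)
    (ω : E → Bool → ℤˣ) (hω : Γ.IsCompatible ω)
    (G : Type) [AddCommGroup G] [Finite G] :
    (Nat.card {f : E → G // Γ.IsFlow ω f ∧ ∀ e : E, f e ≠ 0} : ℚ) =
      ∑ A : Finset E,
        (-1 : ℚ) ^ (Fintype.card E - A.card) *
          ((Nat.card G : ℚ) ^ ((A.card + (Γ.restrict (A : Set E)).kb) - Nat.card V) *
            ((Nat.card G : ℚ) / (Nat.card (twoG G) : ℚ)) ^ (Γ.restrict (A : Set E)).ku) := by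
  have := Fintype.ofFinite V
  have hIE := congrArg (Int.cast : ℤ → ℚ) (card_forall_ne_zero_eq_sum (M := G) (Γ.IsFlow ω))
  push_cast at hIE
  rw [hIE]
  refine Finset.sum_congr rfl fun A _ => ?_
  rw [card_flows_supported, card_flows (Γ := Γ.restrict A) (ω := fun e => ω e) (fun e => hω e),
    Nat.card_coe_set_eq, Set.ncard_coe_finset]

end Statement
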